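/- Suppose sup_{n≥0} ‖D_n‖ < ∞ and let x ∈ ℝ. Let φ and ψ be the Dirichlet and Neumann matrix solutions of the eigenvalue equation at x. Then: (a) the product of truncated norms diverges, lim_{L→∞} ‖φ‖_L ‖ψ‖_L = ∞; (b) consequently, for every y > 0 there exists a real L ≥ 1 such that 2y ‖D_0^{-1}‖_F ‖ψ‖_L ‖φ‖_L = 1. -/

import Mathlib

open Matrix Filter

noncomputable section

/-- The complexification of a real matrix. -/
def cmat {l : ℕ} (A : Matrix (Fin l) (Fin l) ℝ) : Matrix (Fin l) (Fin l) ℂ :=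
  A.map (Complex.ofReal)

/-- The operator norm of a real `l×l` matrix. -/
def opNorm {l : ℕ} (A : Matrix (Fin l) (Fin l) ℝ) : ℝ :=
  ‖Matrix.toEuclideanCLM (𝕜 := ℝ) (n := Fin l) A‖

/-- The Frobenius norm of a complex `l×l` matrix: `‖A‖_F = sqrt(tr(A*A))`. -/
def frob {l : ℕ} (A : Matrix (Fin l) (Fin l) ℂ) : ℝ :=
  Real.sqrt ((Aᴴ * A).trace.re)

/-- The truncated norm at `L ≥ 1` of a sequence `(B_n)_{n≥1}` of `l×l` complex matrices. -/
def truncNorm {l : ℕ} (L : ℝ) (B : ℕ → Matrix (Fin l) (Fin l) ℂ) : ℝ :=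
  Real.sqrt ((∑ n ∈ Finset.Icc 1 ⌊L⌋₊, frob (B n) ^ 2)
    + (L - ⌊L⌋₊) * frob (B (⌊L⌋₊ + 1)) ^ 2)

/-- `U` is a matrix solution of the eigenvalue equation at `w`. -/
def IsMatSol {l : ℕ} (D V : ℕ → Matrix (Fin l) (Fin l) ℝ) (w : ℂ)
    (U : ℕ → Matrix (Fin l) (Fin l) ℂ) : Prop :=
  ∀ n : ℕ, 1 ≤ n →
    cmat (D n) * U (n + 1) + cmat (D (n - 1)) * U (n - 1) + cmat (V n) * U n = w • U n

/-!
The matrix Wronskian `ψₙᵀ Dₙ φₙ₊₁ - ψₙ₊₁ᵀ Dₙ φₙ` does not depend on `n`, because `Dₙ` and `Vₙ`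
are symmetric, and at `n = 0` it equals `D₀`. Since `‖Dₙ‖_F ≤ √l sup ‖Dₙ‖`, submultiplicativity of
the Frobenius norm gives `‖ψₙ‖_F ‖φₙ₊₁‖_F + ‖ψₙ₊₁‖_F ‖φₙ‖_F ≥ δ > 0` for every `n`; summing over
`n ≤ N` and applying Cauchy–Schwarz yields `N δ ≤ 2 ‖φ‖_{N+1} ‖ψ‖_{N+1}`. The truncated norm
`L ↦ ‖B‖_L` is the square root of the piecewise linear interpolation of the partial sums of
`‖Bₙ‖_F²`, hence monotone and continuous, which gives (a); (b) is the intermediate value theorem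
on `[1, ∞)`, starting from `‖ψ‖_1 = ‖ψ₁‖_F = 0`.
-/

open Finset

section Frobenius

attribute [local instance] Matrix.frobeniusNormedAddCommGroup

variable {l : ℕ}

theorem frob_eq_norm (A : Matrix (Fin l) (Fin l) ℂ) : frob A = ‖A‖ := by
  have h : (Aᴴ * A).trace.re = ∑ i, ∑ j, ‖A i j‖ ^ 2 := by
    simp only [Matrix.trace, Matrix.diag, Matrix.mul_apply, Matrix.conjTranspose_apply,
      Complex.re_sum, RCLike.star_def, RCLike.conj_mul]
    rw [Finset.sum_comm]
    norm_cast
  rw [frob, h, Matrix.frobenius_norm_def, ← Real.sqrt_eq_rpow]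
  simp only [Real.rpow_two]

theorem frobenius_norm_le_sqrt_card_mul_opNorm {n : Type*} [Fintype n] [DecidableEq n]
    (A : Matrix n n ℝ) :
    ‖A‖ ≤ √(Fintype.card n) * ‖Matrix.toEuclideanCLM (𝕜 := ℝ) (n := n) A‖ := by
  set T := Matrix.toEuclideanCLM (𝕜 := ℝ) (n := n) A
  have hcol : ∀ j, ∑ i, ‖A i j‖ ^ 2 = ‖T (EuclideanSpace.single j 1)‖ ^ 2 := by
    intro j
    rw [EuclideanSpace.norm_sq_eq]
    simp [T, Matrix.ofLp_toEuclideanCLM, Matrix.mulVec_single]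
  have hsq : ‖A‖ ^ 2 ≤ (√(Fintype.card n) * ‖T‖) ^ 2 :=
    calc ‖A‖ ^ 2 = ∑ j, ∑ i, ‖A i j‖ ^ 2 := by
          rw [Matrix.frobenius_norm_def, ← Real.sqrt_eq_rpow, Real.sq_sqrt (by positivity),
            Finset.sum_comm]
          simp only [Real.rpow_two]
      _ ≤ ∑ _j : n, ‖T‖ ^ 2 := by
          gcongr with j
          rw [hcol]
          simpa using pow_le_pow_left₀ (norm_nonneg _) (T.le_opNorm (EuclideanSpace.single j 1)) 2
      _ = (√(Fintype.card n) * ‖T‖) ^ 2 := by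
          rw [mul_pow, Real.sq_sqrt (Nat.cast_nonneg _), Finset.sum_const, nsmul_eq_mul,
            Finset.card_univ]
  exact le_of_pow_le_pow_left₀ two_ne_zero (by positivity) hsq

theorem frob_cmat_le (A : Matrix (Fin l) (Fin l) ℝ) : frob (cmat A) ≤ √l * opNorm A := by
  rw [frob_eq_norm, cmat, Matrix.frobenius_norm_map_eq A _ Complex.norm_real]
  simpa [opNorm] using frobenius_norm_le_sqrt_card_mul_opNorm A

theorem frob_pos_of_isUnit_det [NeZero l] {A : Matrix (Fin l) (Fin l) ℂ} (hA : IsUnit A.det) :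
    0 < frob A := by
  rw [frob_eq_norm, norm_pos_iff]
  rintro rfl
  simp at hA

theorem frob_nonneg (A : Matrix (Fin l) (Fin l) ℂ) : 0 ≤ frob A := Real.sqrt_nonneg _

theorem frob_sub_le (A B : Matrix (Fin l) (Fin l) ℂ) : frob (A - B) ≤ frob A + frob B := by
  simpa only [frob_eq_norm] using norm_sub_le A B

theorem frob_transpose_mul_mul_le (A B C : Matrix (Fin l) (Fin l) ℂ) :
    frob (Aᵀ * B * C) ≤ frob B * (frob A * frob C) := by
  simp only [frob_eq_norm]
  calc ‖Aᵀ * B * C‖ ≤ ‖Aᵀ‖ * ‖B‖ * ‖C‖ :=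
        (Matrix.frobenius_norm_mul _ _).trans (by gcongr; exact Matrix.frobenius_norm_mul _ _)
    _ = ‖B‖ * (‖A‖ * ‖C‖) := by rw [Matrix.frobenius_norm_transpose]; ring

end Frobenius

theorem isUnit_det_cmat {l : ℕ} {A : Matrix (Fin l) (Fin l) ℝ} (hA : IsUnit A.det) :
    IsUnit (cmat A).det :=
  RingHom.map_det Complex.ofRealHom A ▸ hA.map _

theorem cmat_transpose_of_isSymm {l : ℕ} {A : Matrix (Fin l) (Fin l) ℝ} (hA : A.IsSymm) :
    (cmat A)ᵀ = cmat A :=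
  (hA.map _).eq

def wronskian {l : ℕ} (D : ℕ → Matrix (Fin l) (Fin l) ℝ) (U W : ℕ → Matrix (Fin l) (Fin l) ℂ)
    (n : ℕ) : Matrix (Fin l) (Fin l) ℂ :=
  (U n)ᵀ * cmat (D n) * W (n + 1) - (U (n + 1))ᵀ * cmat (D n) * W n

section Wronskian

variable {l : ℕ} {D V : ℕ → Matrix (Fin l) (Fin l) ℝ} {w : ℂ} {U W : ℕ → Matrix (Fin l) (Fin l) ℂ}

theorem IsMatSol.wronskian_succ (hDsymm : ∀ n, (D n).IsSymm) (hVsymm : ∀ n, (V n).IsSymm)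
    (hU : IsMatSol D V w U) (hW : IsMatSol D V w W) (n : ℕ) :
    wronskian D U W (n + 1) = wronskian D U W n := by
  have hWn := hW (n + 1) n.succ_pos
  have hUn := congrArg Matrix.transpose (hU (n + 1) n.succ_pos)
  simp only [Nat.add_sub_cancel, Matrix.transpose_add, Matrix.transpose_mul,
    Matrix.transpose_smul, cmat_transpose_of_isSymm (hDsymm _),
    cmat_transpose_of_isSymm (hVsymm _)] at hWn hUn
  have hW' : cmat (D (n + 1)) * W (n + 2) =
      w • W (n + 1) - cmat (D n) * W n - cmat (V (n + 1)) * W (n + 1) := by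
    rw [← hWn]; abel
  have hU' : (U (n + 2))ᵀ * cmat (D (n + 1)) =
      w • (U (n + 1))ᵀ - (U n)ᵀ * cmat (D n) - (U (n + 1))ᵀ * cmat (V (n + 1)) := by
    rw [← hUn]; abel
  rw [wronskian, wronskian, Matrix.mul_assoc (U (n + 1))ᵀ, hW', hU']
  simp only [Matrix.mul_sub, Matrix.sub_mul, Matrix.mul_smul, Matrix.smul_mul, Matrix.mul_assoc]
  abel

theorem IsMatSol.wronskian_eq_wronskian_zero (hDsymm : ∀ n, (D n).IsSymm)
    (hVsymm : ∀ n, (V n).IsSymm) (hU : IsMatSol D V w U) (hW : IsMatSol D V w W) (n : ℕ) :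
    wronskian D U W n = wronskian D U W 0 := by
  induction n with
  | zero => rfl
  | succ n ih => rw [hU.wronskian_succ hDsymm hVsymm hW, ih]

theorem frob_wronskian_le {n : ℕ} {C : ℝ} (hC : frob (cmat (D n)) ≤ C) :
    frob (wronskian D U W n) ≤
      C * (frob (U n) * frob (W (n + 1)) + frob (U (n + 1)) * frob (W n)) :=
  calc frob (wronskian D U W n)
      ≤ frob (cmat (D n)) * (frob (U n) * frob (W (n + 1)) + frob (U (n + 1)) * frob (W n)) := by
        rw [mul_add]
        exact (frob_sub_le _ _).trans
          (add_le_add (frob_transpose_mul_mul_le _ _ _) (frob_transpose_mul_mul_le _ _ _))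
    _ ≤ _ := by
        gcongr
        exact add_nonneg (mul_nonneg (frob_nonneg _) (frob_nonneg _))
          (mul_nonneg (frob_nonneg _) (frob_nonneg _))

end Wronskian

theorem sum_Icc_mul_projIcc_eq (f : ℕ → ℝ) {N : ℕ} {L : ℝ} (hL : 0 ≤ L) (hLN : L < N) :
    ∑ n ∈ Icc 1 N, f n * Set.projIcc (0 : ℝ) 1 zero_le_one (L + 1 - n) =
      (∑ n ∈ Icc 1 ⌊L⌋₊, f n) + (L - ⌊L⌋₊) * f (⌊L⌋₊ + 1) := by
  set m := ⌊L⌋₊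
  have hmL : (m : ℝ) ≤ L := Nat.floor_le hL
  have hLm : L < m + 1 := Nat.lt_floor_add_one L
  have hmN : m + 1 ≤ N := by exact_mod_cast (hmL.trans_lt hLN)
  have hlow : ∀ n ∈ Ioc 0 m, f n * Set.projIcc (0 : ℝ) 1 zero_le_one (L + 1 - n) = f n := by
    intro n hn
    have : (n : ℝ) ≤ m := by exact_mod_cast (mem_Ioc.1 hn).2
    rw [Set.projIcc_of_right_le _ (by linarith), mul_one]
  have hhigh : ∀ n ∈ Ioc (m + 1) N, f n * Set.projIcc (0 : ℝ) 1 zero_le_one (L + 1 - n) = 0 := by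
    intro n hn
    have : (m : ℝ) + 2 ≤ n := by exact_mod_cast (mem_Ioc.1 hn).1
    rw [Set.projIcc_of_le_left _ (by linarith)]
    exact mul_eq_zero_of_right _ rfl
  have hmid : ((m + 1 : ℕ) : ℝ) = m + 1 := by push_cast; ring
  have hIcc : ∀ k, Icc 1 k = Ioc 0 k := Icc_add_one_left_eq_Ioc 0
  rw [hIcc, hIcc, ← sum_Ioc_consecutive _ (Nat.zero_le _) hmN,
    sum_Ioc_succ_top (Nat.zero_le _), sum_congr rfl hlow, sum_congr rfl hhigh, sum_const_zero,
    hmid, Set.projIcc_of_mem _ ⟨by linarith, by linarith⟩]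
  ring_nf

section TruncNorm

variable {l : ℕ} (B : ℕ → Matrix (Fin l) (Fin l) ℂ)

-- For `L < 0` both sides vanish: the square root truncates `L * ‖B 1‖_F ^ 2 ≤ 0` to zero.
theorem truncNorm_eq_sqrt_sum {N : ℕ} {L : ℝ} (hLN : L < N) :
    truncNorm L B =
      √(∑ n ∈ Icc 1 N, frob (B n) ^ 2 * Set.projIcc (0 : ℝ) 1 zero_le_one (L + 1 - n)) := by
  rcases le_or_gt 0 L with hL | hL
  · rw [truncNorm, sum_Icc_mul_projIcc_eq _ hL hLN]
  · have hvanish : ∀ n ∈ Icc 1 N,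
        frob (B n) ^ 2 * Set.projIcc (0 : ℝ) 1 zero_le_one (L + 1 - n) = 0 := by
      intro n hn
      have : (1 : ℝ) ≤ n := by exact_mod_cast (mem_Icc.1 hn).1
      rw [Set.projIcc_of_le_left _ (by linarith)]
      exact mul_eq_zero_of_right _ rfl
    rw [sum_eq_zero hvanish, truncNorm, Nat.floor_of_nonpos hL.le, Real.sqrt_zero]
    refine Real.sqrt_eq_zero_of_nonpos ?_
    simpa using mul_nonpos_of_nonpos_of_nonneg hL.le (sq_nonneg (frob (B 1)))

theorem truncNorm_natCast (N : ℕ) : truncNorm N B = √(∑ n ∈ Icc 1 N, frob (B n) ^ 2) := by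
  simp [truncNorm]

theorem truncNorm_nonneg (L : ℝ) : 0 ≤ truncNorm L B := Real.sqrt_nonneg _

theorem monotone_truncNorm : Monotone (truncNorm · B) := by
  intro L₁ L₂ hL
  have hN : L₂ < (⌊L₂⌋₊ + 1 : ℕ) := by exact_mod_cast Nat.lt_floor_add_one L₂
  dsimp only
  rw [truncNorm_eq_sqrt_sum B (hL.trans_lt hN), truncNorm_eq_sqrt_sum B hN]
  gcongr with n
  exact Set.monotone_projIcc _ (by linarith)

theorem continuous_truncNorm : Continuous (truncNorm · B) := by
  refine continuous_iff_continuousAt.2 fun L₀ => ?_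
  have hN : L₀ < (⌊L₀⌋₊ + 1 : ℕ) := by exact_mod_cast Nat.lt_floor_add_one L₀
  have hcont : Continuous fun L : ℝ => √(∑ n ∈ Icc 1 (⌊L₀⌋₊ + 1),
      frob (B n) ^ 2 * Set.projIcc (0 : ℝ) 1 zero_le_one (L + 1 - n)) := by fun_prop
  refine hcont.continuousAt.congr ?_
  filter_upwards [Iio_mem_nhds hN] with L hL
  exact (truncNorm_eq_sqrt_sum B hL).symm

end TruncNorm

theorem sum_Icc_mul_shift_le (u v : ℕ → ℝ) (N : ℕ) :
    ∑ n ∈ Icc 1 N, u n * v (n + 1) ≤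
      √(∑ n ∈ Icc 1 (N + 1), u n ^ 2) * √(∑ n ∈ Icc 1 (N + 1), v n ^ 2) := by
  have hshift : ∑ n ∈ Icc 1 N, v (n + 1) ^ 2 = ∑ n ∈ Icc 2 (N + 1), v n ^ 2 := by
    rw [← map_add_right_Icc 1 N 1, sum_map]
    rfl
  refine (Real.sum_mul_le_sqrt_mul_sqrt _ _ _).trans ?_
  rw [hshift]
  gcongr <;> omega

theorem natCast_mul_le_of_le_mul_shift_add (a b : ℕ → ℝ) {c : ℝ}
    (h : ∀ n, c ≤ a n * b (n + 1) + a (n + 1) * b n) (N : ℕ) :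
    N * c ≤ 2 * (√(∑ n ∈ Icc 1 (N + 1), a n ^ 2) * √(∑ n ∈ Icc 1 (N + 1), b n ^ 2)) :=
  calc N * c = ∑ _n ∈ Icc 1 N, c := by simp
    _ ≤ ∑ n ∈ Icc 1 N, a n * b (n + 1) + ∑ n ∈ Icc 1 N, b n * a (n + 1) := by
      rw [← sum_add_distrib]
      exact sum_le_sum fun n _ => (h n).trans_eq (by ring)
    _ ≤ _ := by
      linarith [sum_Icc_mul_shift_le a b N, sum_Icc_mul_shift_le b a N]

section Divergence

variable {l : ℕ} {U W : ℕ → Matrix (Fin l) (Fin l) ℂ}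

theorem tendsto_truncNorm_mul_atTop {c : ℝ} (hc : 0 < c)
    (h : ∀ n, c ≤ frob (U n) * frob (W (n + 1)) + frob (U (n + 1)) * frob (W n)) :
    Tendsto (fun L => truncNorm L W * truncNorm L U) atTop atTop := by
  refine tendsto_atTop_atTop_of_monotone ((monotone_truncNorm W).mul (monotone_truncNorm U)
    (truncNorm_nonneg W) (truncNorm_nonneg U)) fun b => ?_
  obtain ⟨N, hN⟩ := exists_nat_ge (2 * b / c)
  refine ⟨(N + 1 : ℕ), ?_⟩
  have hgrowth := natCast_mul_le_of_le_mul_shift_add (frob ∘ U) (frob ∘ W) h N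
  rw [div_le_iff₀ hc] at hN
  simp only [Function.comp_apply] at hgrowth
  rw [truncNorm_natCast, truncNorm_natCast, mul_comm]
  linarith

theorem exists_mul_truncNorm_mul_eq_one (hU : U 1 = 0)
    (hUW : Tendsto (fun L => truncNorm L W * truncNorm L U) atTop atTop) {K : ℝ} (hK : 0 < K) :
    ∃ L, 1 ≤ L ∧ K * truncNorm L U * truncNorm L W = 1 := by
  set g := fun L => K * truncNorm L U * truncNorm L W
  have hg1 : g 1 = 0 := by
    have : truncNorm 1 U = 0 := by simpa [hU, frob] using truncNorm_natCast U 1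
    simp [g, this]
  have hg : Tendsto g atTop atTop :=
    (hUW.const_mul_atTop hK).congr fun L => by simp only [g]; ring
  have hcont : Continuous g :=
    (continuous_const.mul (continuous_truncNorm U)).mul (continuous_truncNorm W)
  have hone : (1 : ℝ) ∈ Set.Ici (g 1) := by rw [hg1]; exact Set.mem_Ici.2 zero_le_one
  obtain ⟨L, hL, hgL⟩ := intermediate_value_Ici hcont.continuousOn hg hone
  exact ⟨L, hL, hgL⟩

end Divergence

/-- (a) The product `‖φ‖_L ‖ψ‖_L` of truncated norms of the Dirichlet and Neumann solutions
diverges as `L → ∞`; (b) consequently, for every `y > 0` there is `L ≥ 1` with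
`2 y ‖D_0^{-1}‖_F ‖ψ‖_L ‖φ‖_L = 1`. -/
theorem exists_L_of_y (l : ℕ) (hl : 1 ≤ l)
    (D V : ℕ → Matrix (Fin l) (Fin l) ℝ)
    (hDsymm : ∀ n, (D n).IsSymm) (hVsymm : ∀ n, (V n).IsSymm)
    (hDinv : ∀ n, IsUnit (D n).det)
    (hDbdd : ∃ C : ℝ, ∀ n, opNorm (D n) ≤ C)
    (x : ℝ) (φ ψ : ℕ → Matrix (Fin l) (Fin l) ℂ)
    (hφ : IsMatSol D V (x : ℂ) φ) (hφ0 : φ 0 = 0) (hφ1 : φ 1 = 1)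
    (hψ : IsMatSol D V (x : ℂ) ψ) (hψ0 : ψ 0 = 1) (hψ1 : ψ 1 = 0) :
    Tendsto (fun L : ℝ => truncNorm L φ * truncNorm L ψ) atTop atTop ∧
      ∀ y : ℝ, 0 < y → ∃ L : ℝ, 1 ≤ L ∧
        2 * y * frob ((cmat (D 0))⁻¹) * truncNorm L ψ * truncNorm L φ = 1 := by
  have : NeZero l := ⟨by omega⟩
  obtain ⟨C, hC⟩ := hDbdd
  have hD0 := isUnit_det_cmat (hDinv 0)
  have hD : ∀ n, frob (cmat (D n)) ≤ √l * C :=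
    fun n => (frob_cmat_le _).trans (by gcongr; exact hC n)
  have hCpos : 0 < √l * C := (frob_pos_of_isUnit_det hD0).trans_le (hD 0)
  have hgrowth : ∀ n, frob (cmat (D 0)) / (√l * C) ≤
      frob (ψ n) * frob (φ (n + 1)) + frob (ψ (n + 1)) * frob (φ n) := by
    intro n
    have hW : wronskian D ψ φ n = cmat (D 0) := by
      rw [hψ.wronskian_eq_wronskian_zero hDsymm hVsymm hφ]
      simp [wronskian, hφ0, hφ1, hψ0, hψ1]
    rw [div_le_iff₀' hCpos, ← hW]
    exact frob_wronskian_le (hD n)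
  have hdiv := tendsto_truncNorm_mul_atTop (div_pos (frob_pos_of_isUnit_det hD0) hCpos) hgrowth
  refine ⟨hdiv, fun y hy => exists_mul_truncNorm_mul_eq_one hψ1 hdiv ?_⟩
  have := frob_pos_of_isUnit_det (isUnit_nonsing_inv_det _ hD0)
  positivity
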